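/- arXiv:gr-qc/0211037 — 2 statements merged into one kernel-verified Lean document; each statement's English description precedes it below -/
import Mathlib

section
/- Let $\mathcal{X}, \mathcal{Y}$ be Banach spaces and $Q_\varepsilon : \mathcal{X} \to \mathcal{Y}$, $\varepsilon \in [0,1]$, a continuous (in operator norm) family of bounded linear operators which is uniformly injective, i.e. there exists $C > 0$ independent of $\varepsilon$ with $\|Q_\varepsilon(y)\| \geq C\|y\|$ for all $y$. Suppose $\mathcal{C}$ is a finite-dimensional linear subspace of $\mathcal{Y}$ with $\mathcal{C} \cap \mathrm{Im}(Q_0) = \{0\}$, and assume each $Q_\varepsilon$ has closed image. Then there exists $\varepsilon_0 > 0$ such that $\mathcal{C} \cap \mathrm{Im}(Q_\varepsilon) = \{0\}$ for all $\varepsilon < \varepsilon_0$. -/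
/-
A finite-dimensional subspace `𝒞` meeting a closed subspace `M` only in `0` injects into the
normed quotient `Y ⧸ M`, and an injective linear map out of a finite-dimensional space is
bounded below; hence `‖c‖ ≤ K ‖c - m‖` for `c ∈ 𝒞`, `m ∈ M`.  If `c = B x ∈ 𝒞` with `B` close to
`A := Q 0`, taking `m = A x` gives `‖B x‖ ≤ K ‖B - A‖ ‖x‖ ≤ (K ‖B - A‖ / C) ‖B x‖`, which forces
`B x = 0` once `K ‖B - A‖ < C`; continuity of `Q` at `0` makes this so for small `ε`.
-/

section

variable {𝕜 : Type*} [NontriviallyNormedField 𝕜]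
  {X Y : Type*} [NormedAddCommGroup X] [NormedSpace 𝕜 X] [NormedAddCommGroup Y] [NormedSpace 𝕜 Y]

theorem Submodule.exists_norm_le_mul_norm_sub_of_disjoint [CompleteSpace 𝕜]
    {M 𝒞 : Submodule 𝕜 Y} [IsClosed (M : Set Y)] [FiniteDimensional 𝕜 𝒞] (h : Disjoint 𝒞 M) :
    ∃ K > (0 : ℝ), ∀ c ∈ 𝒞, ∀ m ∈ M, ‖c‖ ≤ K * ‖c - m‖ := by
  have hker : LinearMap.ker (M.mkQ ∘ₗ 𝒞.subtype) = ⊥ := by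
    rw [LinearMap.ker_comp, Submodule.ker_mkQ, ← Submodule.disjoint_iff_comap_eq_bot]
    exact h
  obtain ⟨K, hK, hanti⟩ := (M.mkQ ∘ₗ 𝒞.subtype).exists_antilipschitzWith hker
  refine ⟨K, hK, fun c hc m hm => ?_⟩
  have hquot : ‖M.mkQ c‖ ≤ ‖c - m‖ := by
    have hmk : M.mkQ c = M.mkQ (c - m) := by
      rw [map_sub, M.mkQ_apply m, (Submodule.Quotient.mk_eq_zero M).mpr hm, sub_zero]
    exact hmk ▸ Submodule.Quotient.norm_mk_le M (c - m)
  calc ‖c‖ = ‖(⟨c, hc⟩ : 𝒞)‖ := rfl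
    _ ≤ K * ‖M.mkQ c‖ := ZeroHomClass.bound_of_antilipschitz _ hanti ⟨c, hc⟩
    _ ≤ K * ‖c - m‖ := by gcongr

theorem ContinuousLinearMap.disjoint_range_of_norm_sub_lt {A B : X →L[𝕜] Y}
    {𝒞 : Submodule 𝕜 Y} {K C : ℝ} (hK : 0 ≤ K)
    (hsep : ∀ c ∈ 𝒞, ∀ m ∈ LinearMap.range (A : X →ₗ[𝕜] Y), ‖c‖ ≤ K * ‖c - m‖)
    (hB : ∀ x, C * ‖x‖ ≤ ‖B x‖) (hBA : K * ‖B - A‖ < C) :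
    Disjoint 𝒞 (LinearMap.range (B : X →ₗ[𝕜] Y)) := by
  rw [Submodule.disjoint_def]
  rintro _ hc ⟨x, rfl⟩
  have hx : C * ‖x‖ ≤ K * ‖B - A‖ * ‖x‖ :=
    calc C * ‖x‖ ≤ ‖B x‖ := hB x
      _ ≤ K * ‖B x - A x‖ := hsep _ hc _ (LinearMap.mem_range_self _ x)
      _ ≤ K * (‖B - A‖ * ‖x‖) := by gcongr; exact (B - A).le_opNorm x
      _ = K * ‖B - A‖ * ‖x‖ := by ring
  have hx0 : ‖x‖ = 0 := by nlinarith [norm_nonneg x]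
  simp [norm_eq_zero.mp hx0]

theorem ContinuousLinearMap.exists_disjoint_range_of_norm_sub_lt [CompleteSpace 𝕜]
    {A : X →L[𝕜] Y} (hA : IsClosed (Set.range A)) {𝒞 : Submodule 𝕜 Y} [FiniteDimensional 𝕜 𝒞]
    (h : Disjoint 𝒞 (LinearMap.range (A : X →ₗ[𝕜] Y))) {C : ℝ} (hC : 0 < C) :
    ∃ η > (0 : ℝ), ∀ B : X →L[𝕜] Y, (∀ x, C * ‖x‖ ≤ ‖B x‖) → ‖B - A‖ < η →
      Disjoint 𝒞 (LinearMap.range (B : X →ₗ[𝕜] Y)) := by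
  have : IsClosed (LinearMap.range (A : X →ₗ[𝕜] Y) : Set Y) := by
    rwa [LinearMap.coe_range]
  obtain ⟨K, hK, hsep⟩ := Submodule.exists_norm_le_mul_norm_sub_of_disjoint h
  refine ⟨C / K, by positivity, fun B hB hBA => disjoint_range_of_norm_sub_lt hK.le hsep hB ?_⟩
  rwa [lt_div_iff₀ hK, mul_comm] at hBA

end

theorem cokernel_stability_general
    {X Y : Type*} [NormedAddCommGroup X] [NormedSpace ℝ X]
    [NormedAddCommGroup Y] [NormedSpace ℝ Y]
    (Q : ℝ → X →L[ℝ] Y)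
    (hcont : ContinuousOn Q (Set.Icc (0 : ℝ) 1))
    (C : ℝ) (hC : 0 < C)
    (hinj : ∀ ε ∈ Set.Icc (0 : ℝ) 1, ∀ x : X, C * ‖x‖ ≤ ‖Q ε x‖)
    (hclosed : ∀ ε ∈ Set.Icc (0 : ℝ) 1, IsClosed (Set.range (Q ε)))
    (𝒞 : Submodule ℝ Y) (hfin : FiniteDimensional ℝ 𝒞)
    (h0 : 𝒞 ⊓ LinearMap.range (Q 0 : X →ₗ[ℝ] Y) = ⊥) :
    ∃ ε₀ > (0 : ℝ), ∀ ε ∈ Set.Icc (0 : ℝ) 1, ε < ε₀ →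
      𝒞 ⊓ LinearMap.range (Q ε : X →ₗ[ℝ] Y) = ⊥ := by
  have h0mem : (0 : ℝ) ∈ Set.Icc (0 : ℝ) 1 := ⟨le_rfl, zero_le_one⟩
  obtain ⟨η, hη, hstable⟩ := (Q 0).exists_disjoint_range_of_norm_sub_lt (hclosed 0 h0mem)
    (disjoint_iff.mpr h0) hC
  obtain ⟨ε₀, hε₀, hnear⟩ := Metric.continuousWithinAt_iff.mp (hcont 0 h0mem) η hη
  refine ⟨ε₀, hε₀, fun ε hε hεlt => disjoint_iff.mp (hstable _ (hinj ε hε) ?_)⟩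
  rw [← dist_eq_norm]
  exact hnear hε (by rwa [Real.dist_eq, sub_zero, abs_of_nonneg hε.1])

/-- **Stability of co-kernels** (Proposition 2.2).  Let `Q ε`, `ε ∈ [0,1]`, be a family of
bounded linear operators between Banach spaces `X` and `Y`, continuous in the operator norm,
uniformly injective (`C‖x‖ ≤ ‖Q ε x‖` with `C` independent of `ε`), and with closed images.
If the finite-dimensional subspace `𝒞 ⊆ Y` meets the image of `Q 0` only in `0`, then the same
holds for `Q ε` for all sufficiently small `ε`. -/
theorem cokernel_stability
    {X Y : Type*} [NormedAddCommGroup X] [NormedSpace ℝ X] [CompleteSpace X]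
    [NormedAddCommGroup Y] [NormedSpace ℝ Y] [CompleteSpace Y]
    (Q : ℝ → X →L[ℝ] Y)
    (hcont : ContinuousOn Q (Set.Icc (0 : ℝ) 1))
    (C : ℝ) (hC : 0 < C)
    (hinj : ∀ ε ∈ Set.Icc (0 : ℝ) 1, ∀ x : X, C * ‖x‖ ≤ ‖Q ε x‖)
    (hclosed : ∀ ε ∈ Set.Icc (0 : ℝ) 1, IsClosed (Set.range (Q ε)))
    (𝒞 : Submodule ℝ Y) (hfin : FiniteDimensional ℝ 𝒞)
    (h0 : 𝒞 ⊓ LinearMap.range (Q 0 : X →ₗ[ℝ] Y) = ⊥) :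
    ∃ ε₀ > (0 : ℝ), ∀ ε ∈ Set.Icc (0 : ℝ) 1, ε < ε₀ →
      𝒞 ⊓ LinearMap.range (Q ε : X →ₗ[ℝ] Y) = ⊥ :=
  cokernel_stability_general Q hcont C hC hinj hclosed 𝒞 hfin h0
end

section
/- Fix a nonzero covector $\xi \in \mathbb{R}^3 \setminus \{0\}$. Consider the linear map sending a pair $(F, A)$, where $F$ is a trace-free symmetric 2-tensor and $A$ is a covector on $\mathbb{R}^3$, to the pair consisting of the symmetric trace-free 2-tensor $\varepsilon^e{}_{cb} \xi^c F_{ae} + \varepsilon^e{}_{ca} \xi^c F_{be} - \xi_a A_b - \xi_b A_a + \tfrac{2}{3} \xi^c A_c \delta_{ab}$ and the covector $\xi^b F_{ab} + \varepsilon^{bc}{}_a \xi_b A_c$. Then this map is a linear isomorphism (injective, hence bijective between 8-dimensional spaces). -/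
noncomputable section
open scoped BigOperators
open MeasureTheory Real

/-- Points of `ℝ³`. -/
abbrev Pt := Fin 3 → ℝ

/-- Partial derivative of a (possibly vector-valued) function in the `i`-th coordinate
direction. -/
def pder {F : Type*} [NormedAddCommGroup F] [NormedSpace ℝ F]
    (i : Fin 3) (f : Pt → F) (x : Pt) : F :=
  fderiv ℝ f x (Pi.single i 1)

/-- The alternating (permutation) symbol on three indices. -/
def epsSym (a b c : Fin 3) : ℝ :=
  (((b : ℕ) : ℝ) - ((a : ℕ) : ℝ)) * (((c : ℕ) : ℝ) - ((b : ℕ) : ℝ)) *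
    (((c : ℕ) : ℝ) - ((a : ℕ) : ℝ)) / 2

/-- Kronecker delta. -/
def kd (a b : Fin 3) : ℝ := if a = b then 1 else 0

/-- Symmetry of a 2-tensor. -/
def sym2 (T : Fin 3 → Fin 3 → ℝ) : Prop := ∀ a b, T a b = T b a


/-- First component of the symbol map: the symmetric trace-free 2-tensor
`ε^e{}_{cb} ξ^c F_{ae} + ε^e{}_{ca} ξ^c F_{be} - ξ_a A_b - ξ_b A_a + ⅔ ξ^c A_c δ_{ab}`. -/
def symb1 (ξ : Fin 3 → ℝ) (F : Fin 3 → Fin 3 → ℝ) (A : Fin 3 → ℝ) (a b : Fin 3) : ℝ :=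
  (∑ e, ∑ c, epsSym e c b * ξ c * F a e) + (∑ e, ∑ c, epsSym e c a * ξ c * F b e)
    - ξ a * A b - ξ b * A a + (2 / 3) * (∑ c, ξ c * A c) * kd a b

/-- Second component of the symbol map: the covector `ξ^b F_{ab} + ε^{bc}{}_a ξ_b A_c`. -/
def symb2 (ξ : Fin 3 → ℝ) (F : Fin 3 → Fin 3 → ℝ) (A : Fin 3 → ℝ) (a : Fin 3) : ℝ :=
  (∑ b, ξ b * F a b) + ∑ b, ∑ c, epsSym b c a * ξ b * A c

/-! The symbol maps the space of pairs (trace-free symmetric `F`, covector `A`) to itself, and this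
space is finite-dimensional, so it suffices to show that the kernel is trivial. Contracting the
first component with `ξ` and inserting the second one gives `-2|ξ|² A + ⅔ (ξ·A) ξ = 0`, hence
`ξ·A = 0` and `A = 0`. Then `F ξ = 0`, and for symmetric `F` the sum of squares of the first
component is `4|ξ|²|F|² - 6|Fξ|² - 2|ξ|²(tr F)² + 4 tr F ⟨ξ, Fξ⟩`, which forces `F = 0`. -/

open Matrix

lemma symb2_eq (ξ A : Fin 3 → ℝ) (F : Fin 3 → Fin 3 → ℝ) :
    symb2 ξ F A = F *ᵥ ξ + ξ ⨯₃ A := by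
  ext a
  fin_cases a <;>
  simp only [symb2, epsSym, mulVec, dotProduct, cross_apply, Fin.sum_univ_three,
    Fin.zero_eta, Fin.mk_one, Fin.reduceFinMk, Fin.isValue, Fin.val_zero, Fin.val_one, Fin.val_two,
    Nat.cast_zero, Nat.cast_one, Nat.cast_ofNat, Pi.add_apply, cons_val] <;>
  ring

lemma symb1_mulVec (ξ A : Fin 3 → ℝ) {F : Fin 3 → Fin 3 → ℝ} (hF : sym2 F) :
    symb1 ξ F A *ᵥ ξ = symb2 ξ F A ⨯₃ ξ - (2 * (ξ ⬝ᵥ ξ)) • A + (2 / 3 * (ξ ⬝ᵥ A)) • ξ := by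
  ext a
  fin_cases a <;>
  simp only [symb1, symb2, epsSym, kd, mulVec, dotProduct, cross_apply, Fin.sum_univ_three,
    Fin.zero_eta, Fin.mk_one, Fin.reduceFinMk, Fin.isValue, Fin.val_zero, Fin.val_one, Fin.val_two,
    Nat.cast_zero, Nat.cast_one, Nat.cast_ofNat, Pi.add_apply, Pi.sub_apply, Pi.smul_apply,
    smul_eq_mul, hF 1 0, hF 2 0, hF 2 1, Fin.reduceEq, if_true, if_false, cons_val] <;>
  ring

lemma sum_sq_symb1_zero (ξ : Fin 3 → ℝ) {F : Fin 3 → Fin 3 → ℝ} (hF : sym2 F) :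
    ∑ a, ∑ b, symb1 ξ F 0 a b ^ 2 =
      4 * (ξ ⬝ᵥ ξ) * ∑ a, ∑ b, F a b ^ 2 - 6 * (F *ᵥ ξ ⬝ᵥ F *ᵥ ξ)
        - 2 * (ξ ⬝ᵥ ξ) * (∑ a, F a a) ^ 2 + 4 * (∑ a, F a a) * (ξ ⬝ᵥ F *ᵥ ξ) := by
  simp only [symb1, epsSym, kd, mulVec, dotProduct, Fin.sum_univ_three, Fin.isValue, Fin.val_zero,
    Fin.val_one, Fin.val_two, Nat.cast_zero, Nat.cast_one, Nat.cast_ofNat, Pi.zero_apply,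
    hF 1 0, hF 2 0, hF 2 1, Fin.reduceEq, if_true, if_false]
  ring

lemma eq_zero_of_symb_eq_zero {ξ A : Fin 3 → ℝ} {F : Fin 3 → Fin 3 → ℝ} (hξ : ξ ≠ 0)
    (hF : sym2 F) (htr : ∑ a, F a a = 0) (h1 : symb1 ξ F A = 0) (h2 : symb2 ξ F A = 0) :
    F = 0 ∧ A = 0 := by
  have hξξ : ξ ⬝ᵥ ξ ≠ 0 := dotProduct_self_eq_zero.not.mpr hξ
  have hA : A = 0 := by
    have hcontr := symb1_mulVec ξ A hF
    have h1ξ : symb1 ξ F A *ᵥ ξ = 0 := by ext; simp [h1, mulVec]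
    rw [h1ξ, h2, map_zero, LinearMap.zero_apply, zero_sub] at hcontr
    have hξA : ξ ⬝ᵥ A = 0 := by
      have hdot := congrArg (ξ ⬝ᵥ ·) hcontr
      simp only [dotProduct_zero, dotProduct_add, dotProduct_neg, dotProduct_smul,
        smul_eq_mul] at hdot
      have : (ξ ⬝ᵥ ξ) * (ξ ⬝ᵥ A) = 0 := by linear_combination 3 / 4 * hdot
      exact (mul_eq_zero.mp this).resolve_left hξξ
    simpa [hξA, hξξ] using hcontr
  subst hA
  have hFξ : F *ᵥ ξ = 0 := by simpa [symb2_eq] using h2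
  have hnorm := sum_sq_symb1_zero ξ hF
  simp only [h1, hFξ, htr, Pi.zero_apply, dotProduct_zero] at hnorm
  have hsq : ∑ a, ∑ b, F a b ^ 2 = 0 := by
    have : (ξ ⬝ᵥ ξ) * ∑ a, ∑ b, F a b ^ 2 = 0 := by linear_combination -hnorm / 4
    exact (mul_eq_zero.mp this).resolve_left hξξ
  have hrow : ∀ a, ∑ b, F a b ^ 2 = 0 := fun a =>
    (Finset.sum_eq_zero_iff_of_nonneg fun a _ => by positivity).mp hsq a (Finset.mem_univ a)
  refine ⟨funext₂ fun a b => ?_, rfl⟩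
  exact pow_eq_zero_iff two_ne_zero |>.mp <|
    (Finset.sum_eq_zero_iff_of_nonneg fun b _ => by positivity).mp (hrow a) b (Finset.mem_univ b)

def traceFreeSymm : Submodule ℝ (Fin 3 → Fin 3 → ℝ) where
  carrier := {F | sym2 F ∧ ∑ a, F a a = 0}
  add_mem' {F G} hF hG := ⟨fun a b => by simp [hF.1 a b, hG.1 a b],
    by simp [Finset.sum_add_distrib, hF.2, hG.2]⟩
  zero_mem' := ⟨fun _ _ => rfl, by simp⟩
  smul_mem' c F hF := ⟨fun a b => by simp [hF.1 a b], by simp [← Finset.mul_sum, hF.2]⟩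

lemma symb1_mem_traceFreeSymm (ξ A : Fin 3 → ℝ) {F : Fin 3 → Fin 3 → ℝ} (hF : sym2 F) :
    symb1 ξ F A ∈ traceFreeSymm := by
  refine ⟨fun a b => by simp only [symb1, kd, eq_comm]; ring, ?_⟩
  simp only [symb1, epsSym, kd, Fin.sum_univ_three, Fin.isValue, Fin.val_zero, Fin.val_one,
    Fin.val_two, Nat.cast_zero, Nat.cast_one, Nat.cast_ofNat, hF 1 0, hF 2 0, hF 2 1, if_true]
  ring

def symbolMap (ξ : Fin 3 → ℝ) :
    ((Fin 3 → Fin 3 → ℝ) × (Fin 3 → ℝ)) →ₗ[ℝ] (Fin 3 → Fin 3 → ℝ) × (Fin 3 → ℝ) where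
  toFun x := (symb1 ξ x.1 x.2, symb2 ξ x.1 x.2)
  map_add' x y := by
    ext <;> simp only [symb1, symb2, Prod.fst_add, Prod.snd_add, Pi.add_apply, Fin.sum_univ_three,
      Prod.mk_add_mk] <;> ring
  map_smul' c x := by
    ext <;> simp only [symb1, symb2, Prod.smul_fst, Prod.smul_snd, Pi.smul_apply, smul_eq_mul,
      Fin.sum_univ_three, RingHom.id_apply, Prod.smul_mk] <;> ring

def symbolOn (ξ : Fin 3 → ℝ) :
    traceFreeSymm.prod (⊤ : Submodule ℝ (Fin 3 → ℝ)) →ₗ[ℝ]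
      traceFreeSymm.prod (⊤ : Submodule ℝ (Fin 3 → ℝ)) :=
  (symbolMap ξ).restrict fun x hx => ⟨symb1_mem_traceFreeSymm ξ x.2 hx.1.1, trivial⟩

lemma symbolOn_injective {ξ : Fin 3 → ℝ} (hξ : ξ ≠ 0) : Function.Injective (symbolOn ξ) := by
  refine LinearMap.ker_eq_bot.mp (LinearMap.ker_eq_bot'.mpr fun ⟨⟨F, A⟩, ⟨hF, htr⟩, _⟩ h => ?_)
  have h' := congrArg Subtype.val h
  obtain ⟨rfl, rfl⟩ :=
    eq_zero_of_symb_eq_zero hξ hF htr (congrArg Prod.fst h') (congrArg Prod.snd h')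
  rfl

/-- **Ellipticity of the symbol of `𝒫`** (Proposition in Section 4.2): for any nonzero
covector `ξ`, the linear map `(F, A) ↦ (symb1, symb2)` on (trace-free symmetric 2-tensors) ×
(covectors) is a linear isomorphism: it is injective, hence bijective between 8-dimensional
spaces. -/
theorem symbol_isomorphism (ξ : Fin 3 → ℝ) (hξ : ξ ≠ 0) :
    (∀ (F F' : Fin 3 → Fin 3 → ℝ) (A A' : Fin 3 → ℝ),
      sym2 F → (∑ a, F a a) = 0 → sym2 F' → (∑ a, F' a a) = 0 →
      (∀ a b, symb1 ξ F A a b = symb1 ξ F' A' a b) →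
      (∀ a, symb2 ξ F A a = symb2 ξ F' A' a) → F = F' ∧ A = A') ∧
    (∀ (G : Fin 3 → Fin 3 → ℝ) (B : Fin 3 → ℝ), sym2 G → (∑ a, G a a) = 0 →
      ∃ (F : Fin 3 → Fin 3 → ℝ) (A : Fin 3 → ℝ), sym2 F ∧ (∑ a, F a a) = 0 ∧
        (∀ a b, symb1 ξ F A a b = G a b) ∧ ∀ a, symb2 ξ F A a = B a) := by
  have hinj := symbolOn_injective hξ
  have hsurj := LinearMap.injective_iff_surjective.mp hinj
  refine ⟨fun F F' A A' hF htF hF' htF' h1 h2 => ?_, fun G B hG htG => ?_⟩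
  · have h := @hinj ⟨(F, A), ⟨hF, htF⟩, trivial⟩ ⟨(F', A'), ⟨hF', htF'⟩, trivial⟩
      (Subtype.ext (Prod.ext (funext₂ h1) (funext h2)))
    simpa using congrArg Subtype.val h
  · obtain ⟨⟨⟨F, A⟩, ⟨hF, htF⟩, _⟩, h⟩ := hsurj ⟨(G, B), ⟨hG, htG⟩, trivial⟩
    have h' := congrArg Subtype.val h
    exact ⟨F, A, hF, htF, fun a b => congrFun₂ (congrArg Prod.fst h') a b,
      congrFun (congrArg Prod.snd h')⟩
end
end
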